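/- arXiv:1903.02799 — 2 statements merged into one kernel-verified Lean document; each statement's English description precedes it below -/
import Mathlib

section
/- Let Q be a real normed vector space, i : Q → ℝ three times continuously Fréchet differentiable and j : Q → ℝ four times continuously Fréchet differentiable. Define m : Q × Q → ℝ by m(q, p) := i(q) + Dj(q)(p). Then m is three times continuously Fréchet differentiable, and for all q, p, e, e* ∈ Q the third Fréchet derivative of m at (q, p) evaluated at three copies of the direction (e, e*) satisfies: D³m(q, p)((e, e*), (e, e*), (e, e*)) = D³i(q)(e, e, e) + D⁴j(q)(e, e, e, p) + 3·D³j(q)(e, e, e*). -/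
/-!
Along the line `t ↦ (q, p) + t • (e, e*)` the functional becomes
`i (q + t e) + Dj (q + t e) p + t · Dj (q + t e) e*`, and the third derivative of a
one-variable function along a line is the third Fréchet derivative on the diagonal. By
Leibniz's rule only one term of `(t · c t)'''` survives at `t = 0`, namely `3 c''(0)`, and
`c''(0) = D³j(q)(e, e, e*)`.
-/

section LineDerivatives

variable {𝕜 : Type*} [NontriviallyNormedField 𝕜]
  {E : Type*} [NormedAddCommGroup E] [NormedSpace 𝕜 E]
  {F : Type*} [NormedAddCommGroup F] [NormedSpace 𝕜 F]

theorem iteratedDeriv_comp_add_smul {n : ℕ} {f : E → F} (hf : ContDiff 𝕜 n f) (x y : E) (t : 𝕜) :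
    iteratedDeriv n (fun s : 𝕜 => f (x + s • y)) t
      = iteratedFDeriv 𝕜 n f (x + t • y) (fun _ => y) := by
  induction n generalizing t with
  | zero => simp
  | succ n ih =>
    have ih' := funext (ih (hf.of_le (by norm_cast; omega)))
    rw [iteratedDeriv_succ, ih']
    exact hf.contDiffAt.deriv_fderiv_add_smul

theorem iteratedDeriv_fderiv_comp_add_smul_apply {n : ℕ} {f : E → F} (hf : ContDiff 𝕜 (n + 1) f)
    (x v w : E) (t : 𝕜) :
    iteratedDeriv n (fun s : 𝕜 => fderiv 𝕜 f (x + s • v) w) t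
      = iteratedFDeriv 𝕜 (n + 1) f (x + t • v) (Fin.snoc (fun _ => v) w) := by
  have hf' : ContDiff 𝕜 n (fderiv 𝕜 f) := hf.fderiv_right le_rfl
  rw [iteratedDeriv_comp_add_smul (hf'.clm_apply contDiff_const),
    iteratedFDeriv_clm_apply_const_apply hf' le_rfl, iteratedFDeriv_succ_apply_right,
    Fin.init_snoc, Fin.snoc_last]

theorem iteratedDeriv_succ_id_mul_zero {n : ℕ} {c : 𝕜 → 𝕜} (hc : ContDiffAt 𝕜 (n + 1) c 0) :
    iteratedDeriv (n + 1) (fun t => t * c t) 0 = (n + 1) * iteratedDeriv n c 0 := by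
  rw [iteratedDeriv_fun_mul (f := fun t => t) contDiffAt_id hc, Finset.sum_eq_single 1]
  · simp
  · intro b _ hb; simp [iteratedDeriv_fun_id_zero, hb]
  · simp

end LineDerivatives

/-- For `i ∈ C³(Q,ℝ)`, `j ∈ C⁴(Q,ℝ)` and `m(q,p) := i(q) + Dj(q)(p)`, the auxiliary
functional `m` is `C³` and its third Fréchet derivative at `(q,p)` in three copies
of the direction `(e, e*)` is
`D³m(q,p)((e,e*),(e,e*),(e,e*)) = D³i(q)(e,e,e) + D⁴j(q)(e,e,e,p) + 3 D³j(q)(e,e,e*)`. -/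
theorem third_derivative_auxiliary_functional
    (Q : Type*) [NormedAddCommGroup Q] [NormedSpace ℝ Q]
    (i : Q → ℝ) (hi : ContDiff ℝ 3 i)
    (j : Q → ℝ) (hj : ContDiff ℝ 4 j)
    (m : Q × Q → ℝ) (hm : ∀ q p : Q, m (q, p) = i q + fderiv ℝ j q p) :
    ContDiff ℝ 3 m ∧
      ∀ q p e estar : Q,
        (iteratedFDeriv ℝ 3 m (q, p) fun _ => (e, estar))
          = (iteratedFDeriv ℝ 3 i q fun _ => e)
            + iteratedFDeriv ℝ 4 j q ![e, e, e, p]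
            + 3 * iteratedFDeriv ℝ 3 j q ![e, e, estar] := by
  obtain rfl : m = fun x => i x.1 + fderiv ℝ j x.1 x.2 := funext fun x => hm x.1 x.2
  have hDj : ContDiff ℝ 3 (fderiv ℝ j) := hj.fderiv_right (by norm_num)
  have hmc : ContDiff ℝ 3 fun x : Q × Q => i x.1 + fderiv ℝ j x.1 x.2 := by fun_prop
  refine ⟨hmc, fun q p e estar => ?_⟩
  have hm_line : (fun t : ℝ => i (q + t • e) + fderiv ℝ j (q + t • e) (p + t • estar))
      = fun t => i (q + t • e)
          + (fderiv ℝ j (q + t • e) p + t * fderiv ℝ j (q + t • e) estar) := by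
    simp only [map_add, map_smul, smul_eq_mul]
  have hvec4 : ![e, e, e, p] = Fin.snoc (fun _ : Fin 3 => e) p := by
    ext k; fin_cases k <;> rfl
  have hvec3 : ![e, e, estar] = Fin.snoc (fun _ : Fin 2 => e) estar := by
    ext k; fin_cases k <;> rfl
  have hm_diag := iteratedDeriv_comp_add_smul (n := 3) hmc (q, p) (e, estar) 0
  simp only [zero_smul, add_zero, Prod.smul_mk, Prod.mk_add_mk, hm_line] at hm_diag
  rw [← hm_diag, iteratedDeriv_fun_add (by fun_prop) (by fun_prop),
    iteratedDeriv_fun_add (by fun_prop) (by fun_prop), iteratedDeriv_succ_id_mul_zero (by fun_prop),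
    hvec4, hvec3, iteratedDeriv_comp_add_smul hi, iteratedDeriv_fderiv_comp_add_smul_apply hj,
    iteratedDeriv_fderiv_comp_add_smul_apply (hj.of_le (by norm_num))]
  simp only [zero_smul, add_zero]
  ring
end

section
/- (Proposition: adjoint variables when the quantity of interest equals the cost functional) Let U, Q, V be real normed vector spaces. Let A : U × Q → V* be twice continuously Fréchet differentiable, J : U × Q → ℝ twice continuously Fréchet differentiable, and S : Q → U twice continuously Fréchet differentiable with A(S(q), q) = 0 for all q ∈ Q. Define the reduced cost functional j(q) := J(S(q), q). Let q̄ ∈ Q satisfy Dj(q̄) = 0, let ū := S(q̄), and let z̄ ∈ V satisfy the adjoint state equation D_uJ(ū, q̄)(δu) − D_uA(ū, q̄)(δu)(z̄) = 0 for all δu ∈ U. Suppose the map p ↦ D²j(q̄)(·, p) from Q to Q* is injective and the map z ↦ D_uA(ū, q̄)(·)(z) from V to U* is injective. If p̄ ∈ Q solves D²j(q̄)(δq, p̄) = −Dj(q̄)(δq) for all δq ∈ Q, v̄ := DS(q̄)(p̄), and ȳ ∈ V satisfies, for all δu ∈ U, D²L(ū,q̄,z̄)((δu,0,0),(v̄,p̄,ȳ))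 = −D_uJ(ū,q̄)(δu), where L(u,q,z) := J(u,q) − A(u,q)(z), then (v̄, p̄, ȳ) = (0, 0, z̄). -/
/-!
Since `Dj(q̄) = 0`, the equation for `p̄` says `D²j(q̄)(·, p̄) = 0 = D²j(q̄)(·, 0)`, so `p̄ = 0` by
injectivity, and then `v̄ = DS(q̄) 0 = 0`. The equation for `ȳ` then only involves the mixed
`(u, z)`-second derivative of `L`, which is `-D_uA(ū, q̄)(·)(ȳ)` because `L` is affine in `z`.
Comparing with the adjoint equation `D_uJ = D_uA(ū, q̄)(·)(z̄)` and using injectivity of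
`z ↦ D_uA(ū, q̄)(·)(z)` gives `ȳ = z̄`.
-/

open ContinuousLinearMap

section
variable {𝕜 E F : Type*} [NontriviallyNormedField 𝕜] [NormedAddCommGroup E] [NormedSpace 𝕜 E]
  [NormedAddCommGroup F] [NormedSpace 𝕜 F]

theorem iteratedFDeriv_two_apply_eq_fderiv_fderiv_apply {f : E → F} {x : E}
    (hf : DifferentiableAt 𝕜 (fderiv 𝕜 f) x) (a b : E) :
    iteratedFDeriv 𝕜 2 f x ![a, b] = fderiv 𝕜 (fun y => fderiv 𝕜 f y b) x a := by
  rw [iteratedFDeriv_two_apply, fderiv_clm_apply hf (differentiableAt_const b)]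
  simp
end

section
variable {U Q V : Type*} [NormedAddCommGroup U] [NormedSpace ℝ U]
    [NormedAddCommGroup Q] [NormedSpace ℝ Q]
    [NormedAddCommGroup V] [NormedSpace ℝ V]
    {A : U × Q → V →L[ℝ] ℝ} {J : U × Q → ℝ}

variable (U Q V) in
noncomputable def stateControlProj : U × Q × V →L[ℝ] U × Q :=
  (fst ℝ U (Q × V)).prod ((fst ℝ Q V).comp (snd ℝ U (Q × V)))

@[simp]
theorem stateControlProj_apply (p : U × Q × V) : stateControlProj U Q V p = (p.1, p.2.1) := rfl

noncomputable def lagrangian (J : U × Q → ℝ) (A : U × Q → V →L[ℝ] ℝ) (p : U × Q × V) : ℝ :=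
  J (stateControlProj U Q V p) - A (stateControlProj U Q V p) p.2.2

theorem fderiv_lagrangian_apply_adjoint (hA : Differentiable ℝ A) (hJ : Differentiable ℝ J)
    (x : U × Q × V) (y : V) :
    fderiv ℝ (lagrangian J A) x (0, 0, y) = -A (x.1, x.2.1) y := by
  unfold lagrangian
  rw [fderiv_fun_sub (by fun_prop) (by fun_prop),
    fderiv_clm_apply (by fun_prop) (by fun_prop),
    fderiv_fun_comp _ (hJ _) (by fun_prop), fderiv_fun_comp _ (hA _) (by fun_prop),
    fderiv.snd (f₂ := Prod.snd) differentiableAt_snd]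
  simp [fderiv_snd, ← Prod.zero_eq_mk]

theorem iteratedFDeriv_two_lagrangian_state_adjoint (hA : ContDiff ℝ 2 A) (hJ : ContDiff ℝ 2 J)
    (x : U × Q × V) (δu : U) (y : V) :
    iteratedFDeriv ℝ 2 (lagrangian J A) x ![(δu, 0, 0), (0, 0, y)]
      = -fderiv ℝ A (x.1, x.2.1) (δu, 0) y := by
  have hL : ContDiff ℝ 2 (lagrangian J A) := by unfold lagrangian; fun_prop
  have hA' : Differentiable ℝ A := hA.differentiable two_ne_zero
  rw [iteratedFDeriv_two_apply_eq_fderiv_fderiv_apply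
      ((hL.fderiv_right (m := 1) le_rfl).differentiable one_ne_zero _),
    funext (fderiv_lagrangian_apply_adjoint hA' (hJ.differentiable two_ne_zero) · y)]
  change fderiv ℝ (fun p => -A (stateControlProj U Q V p) y) x _ = _
  rw [fderiv_fun_neg, fderiv_clm_apply (by fun_prop) (by fun_prop),
    fderiv_fun_comp _ (hA' _) (by fun_prop), ContinuousLinearMap.fderiv]
  simp
end

theorem adjoint_variables_when_goal_equals_cost_general
    (U Q V : Type*) [NormedAddCommGroup U] [NormedSpace ℝ U]
    [NormedAddCommGroup Q] [NormedSpace ℝ Q]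
    [NormedAddCommGroup V] [NormedSpace ℝ V]
    (A : U × Q → V →L[ℝ] ℝ) (hA : ContDiff ℝ 2 A)
    (J : U × Q → ℝ) (hJ : ContDiff ℝ 2 J)
    (S : Q → U)
    (L : U × Q × V → ℝ) (hL : ∀ (u : U) (q : Q) (z : V), L (u, q, z) = J (u, q) - A (u, q) z)
    (j : Q → ℝ)
    (qbar : Q) (hopt : fderiv ℝ j qbar = 0)
    (ubar : U)
    (zbar : V)
    (hzbar : ∀ δu : U,
      fderiv ℝ J (ubar, qbar) (δu, (0 : Q))
        - fderiv ℝ A (ubar, qbar) (δu, (0 : Q)) zbar = 0)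
    (hjinj : ∀ p₁ p₂ : Q,
      (∀ δq : Q, iteratedFDeriv ℝ 2 j qbar ![δq, p₁]
        = iteratedFDeriv ℝ 2 j qbar ![δq, p₂]) → p₁ = p₂)
    (hAinj : ∀ z₁ z₂ : V,
      (∀ δu : U, fderiv ℝ A (ubar, qbar) (δu, (0 : Q)) z₁
        = fderiv ℝ A (ubar, qbar) (δu, (0 : Q)) z₂) → z₁ = z₂)
    (pbar : Q)
    (hpbar : ∀ δq : Q,
      iteratedFDeriv ℝ 2 j qbar ![δq, pbar] = -(fderiv ℝ j qbar δq))
    (vbar : U) (hvbar : vbar = fderiv ℝ S qbar pbar)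
    (ybar : V)
    (hybar : ∀ δu : U,
      iteratedFDeriv ℝ 2 L (ubar, qbar, zbar)
          ![((δu, (0 : Q), (0 : V)) : U × Q × V), (vbar, pbar, ybar)]
        = -(fderiv ℝ J (ubar, qbar) (δu, (0 : Q)))) :
    vbar = 0 ∧ pbar = 0 ∧ ybar = zbar := by
  have hpbar0 : pbar = 0 := hjinj pbar 0 fun δq => by
    rw [hpbar δq, hopt, (iteratedFDeriv ℝ 2 j qbar).map_coord_zero 1 (by simp)]
    simp
  have hvbar0 : vbar = 0 := by rw [hvbar, hpbar0, map_zero]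
  refine ⟨hvbar0, hpbar0, hAinj ybar zbar fun δu => ?_⟩
  have hLag : L = lagrangian J A := funext fun ⟨u, q, z⟩ => hL u q z
  have hmixed := hybar δu
  rw [hLag, hvbar0, hpbar0, iteratedFDeriv_two_lagrangian_state_adjoint hA hJ] at hmixed
  linarith [hzbar δu]

/-- Proposition: when the quantity of interest equals the cost functional and
`D²j(q̄)` is injective (as a map `p ↦ D²j(q̄)(·,p)`), as well as
`z ↦ D_uA(ū,q̄)(·)(z)`, the adjoint variables satisfy `(v̄, p̄, ȳ) = (0, 0, z̄)`. -/
theorem adjoint_variables_when_goal_equals_cost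
    (U Q V : Type*) [NormedAddCommGroup U] [NormedSpace ℝ U]
    [NormedAddCommGroup Q] [NormedSpace ℝ Q]
    [NormedAddCommGroup V] [NormedSpace ℝ V]
    (A : U × Q → V →L[ℝ] ℝ) (hA : ContDiff ℝ 2 A)
    (J : U × Q → ℝ) (hJ : ContDiff ℝ 2 J)
    (S : Q → U) (hS : ContDiff ℝ 2 S)
    (hstate : ∀ q : Q, A (S q, q) = 0)
    (L : U × Q × V → ℝ) (hL : ∀ (u : U) (q : Q) (z : V), L (u, q, z) = J (u, q) - A (u, q) z)
    (j : Q → ℝ) (hj : ∀ q : Q, j q = J (S q, q))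
    (qbar : Q) (hopt : fderiv ℝ j qbar = 0)
    (ubar : U) (hubar : ubar = S qbar)
    (zbar : V)
    (hzbar : ∀ δu : U,
      fderiv ℝ J (ubar, qbar) (δu, (0 : Q))
        - fderiv ℝ A (ubar, qbar) (δu, (0 : Q)) zbar = 0)
    (hjinj : ∀ p₁ p₂ : Q,
      (∀ δq : Q, iteratedFDeriv ℝ 2 j qbar ![δq, p₁]
        = iteratedFDeriv ℝ 2 j qbar ![δq, p₂]) → p₁ = p₂)
    (hAinj : ∀ z₁ z₂ : V,
      (∀ δu : U, fderiv ℝ A (ubar, qbar) (δu, (0 : Q)) z₁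
        = fderiv ℝ A (ubar, qbar) (δu, (0 : Q)) z₂) → z₁ = z₂)
    (pbar : Q)
    (hpbar : ∀ δq : Q,
      iteratedFDeriv ℝ 2 j qbar ![δq, pbar] = -(fderiv ℝ j qbar δq))
    (vbar : U) (hvbar : vbar = fderiv ℝ S qbar pbar)
    (ybar : V)
    (hybar : ∀ δu : U,
      iteratedFDeriv ℝ 2 L (ubar, qbar, zbar)
          ![((δu, (0 : Q), (0 : V)) : U × Q × V), (vbar, pbar, ybar)]
        = -(fderiv ℝ J (ubar, qbar) (δu, (0 : Q)))) :
    vbar = 0 ∧ pbar = 0 ∧ ybar = zbar :=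
  adjoint_variables_when_goal_equals_cost_general U Q V A hA J hJ S L hL j qbar hopt ubar zbar hzbar
    hjinj hAinj pbar hpbar vbar hvbar ybar hybar
end
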